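/- For any x ∈ [5/11, 6/11], h(x²) + h((1−x)²) ≤ 2·h(36/121), where h is the binary entropy function (base 2). -/

import Mathlib

/-- The binary entropy function (with `h 0 = h 1 = 0`, since `Real.logb 2 0 = 0`). -/
noncomputable def binEnt (x : ℝ) : ℝ :=
  -(x * Real.logb 2 x) - (1 - x) * Real.logb 2 (1 - x)

lemma binEnt_eq_binEntropy_div_log_two (x : ℝ) : binEnt x = Real.binEntropy x / Real.log 2 := by
  simp only [binEnt, Real.binEntropy, Real.logb, Real.log_inv]
  ring

lemma binEnt_monotoneOn : MonotoneOn binEnt (Set.Icc 0 2⁻¹) := by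
  intro a ha b hb hab
  simp only [binEnt_eq_binEntropy_div_log_two]
  exact div_le_div_of_nonneg_right (Real.binEntropy_strictMonoOn.monotoneOn ha hb hab)
    (Real.log_nonneg one_le_two)

lemma binEnt_sq_le_binEnt_sq {x c : ℝ} (hx : |x| ≤ c) (hc : c ^ 2 ≤ 2⁻¹) :
    binEnt (x ^ 2) ≤ binEnt (c ^ 2) := by
  have hxc : x ^ 2 ≤ c ^ 2 := sq_le_sq' (abs_le.1 hx).1 (abs_le.1 hx).2
  exact binEnt_monotoneOn ⟨sq_nonneg x, hxc.trans hc⟩ ⟨sq_nonneg c, hc⟩ hxc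

theorem binEnt_sq_add_le_of_middle (x : ℝ) (hx : x ∈ Set.Icc (5 / 11 : ℝ) (6 / 11)) :
    binEnt (x ^ 2) + binEnt ((1 - x) ^ 2) ≤ 2 * binEnt (36 / 121) := by
  obtain ⟨hx_lower, hx_upper⟩ := hx
  have hc : (6 / 11 : ℝ) ^ 2 ≤ 2⁻¹ := by norm_num
  rw [show (36 / 121 : ℝ) = (6 / 11) ^ 2 by norm_num, two_mul]
  exact add_le_add
    (binEnt_sq_le_binEnt_sq (abs_le.2 ⟨by linarith, hx_upper⟩) hc)
    (binEnt_sq_le_binEnt_sq (abs_le.2 ⟨by linarith, by linarith⟩) hc)
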